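/- arXiv:1909.03638 — 7 statements merged into one kernel-verified Lean document; each statement's English description precedes it below -/
import Mathlib

section
/- Let S and A be finite nonempty types, r : S → A → ℝ a reward function, P : S → A → S → ℝ a transition kernel with P s a s' ≥ 0 for all s, a, s' and ∑_{s'} P s a s' = 1 for all s, a, and let γ ∈ [0,1) be a discount factor. Let (g_S, g_A) be an MDP symmetry, i.e. bijections g_S : S ≃ S and g_A : A ≃ A such that r (g_S s) (g_A a) = r s a and P (g_S s) (g_A a) (g_S s') = P s a s' for all s, a, s'. Then the Bellman optimality operator T, defined by (T Q) s a = r s a + γ · ∑_{s'} P s a s' · (max_{a'} Q s' a'), has a unique fixed point Q* : S → A → ℝ, and this fixed point satisfies Q* (g_S s) (g_A a) = Q* s a for all s ∈ S and a ∈ A. -/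
/-- Difference of `sup'`s is bounded by a uniform bound on pointwise differences. -/
lemma abs_sup'_sub_sup'_le_of_forall {A : Type*} [Fintype A] [Nonempty A]
    (u v : A → ℝ) (c : ℝ) (h : ∀ a, |u a - v a| ≤ c) :
    |Finset.univ.sup' Finset.univ_nonempty u - Finset.univ.sup' Finset.univ_nonempty v| ≤ c := by
  rw [abs_sub_le_iff]
  constructor
  · rw [sub_le_iff_le_add]
    apply Finset.sup'_le
    intro a _
    have := (abs_sub_le_iff.mp (h a)).1
    have hv : v a ≤ Finset.univ.sup' Finset.univ_nonempty v :=
      Finset.le_sup' v (Finset.mem_univ a)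
    linarith
  · rw [sub_le_iff_le_add]
    apply Finset.sup'_le
    intro a _
    have := (abs_sub_le_iff.mp (h a)).2
    have hu : u a ≤ Finset.univ.sup' Finset.univ_nonempty u :=
      Finset.le_sup' u (Finset.mem_univ a)
    linarith

/-- For a finite MDP with an MDP symmetry `(gS, gA)`, the Bellman
optimality operator `T` has a unique fixed point `Q*`, and this fixed point is invariant
under the symmetry: `Q* (gS s) (gA a) = Q* s a`. -/
theorem bellman_unique_fixedPoint_symmetric
    {S A : Type*} [Fintype S] [Fintype A] [Nonempty S] [Nonempty A]
    (r : S → A → ℝ) (P : S → A → S → ℝ)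
    (hP0 : ∀ s a s', 0 ≤ P s a s') (hP1 : ∀ s a, ∑ s', P s a s' = 1)
    (γ : ℝ) (hγ0 : 0 ≤ γ) (hγ1 : γ < 1)
    (gS : S ≃ S) (gA : A ≃ A)
    (hr : ∀ s a, r (gS s) (gA a) = r s a)
    (hPsym : ∀ s a s', P (gS s) (gA a) (gS s') = P s a s')
    (T : (S → A → ℝ) → (S → A → ℝ))
    (hT : ∀ Q s a, T Q s a =
      r s a + γ * ∑ s', P s a s' *
        (Finset.univ.sup' Finset.univ_nonempty (fun a' => Q s' a'))) :
    (∃! Qstar : S → A → ℝ, T Qstar = Qstar) ∧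
      (∀ Qstar : S → A → ℝ, T Qstar = Qstar →
        ∀ s a, Qstar (gS s) (gA a) = Qstar s a) := by
  -- Contraction estimate
  have key : ∀ Q1 Q2 : S → A → ℝ, dist (T Q1) (T Q2) ≤ γ * dist Q1 Q2 := by
    intro Q1 Q2
    have hd0 : (0:ℝ) ≤ dist Q1 Q2 := dist_nonneg
    have hc : (0:ℝ) ≤ γ * dist Q1 Q2 := mul_nonneg hγ0 hd0
    rw [dist_pi_le_iff hc]
    intro s
    rw [dist_pi_le_iff hc]
    intro a
    rw [Real.dist_eq, hT, hT]
    have habs : ∀ s', |Finset.univ.sup' Finset.univ_nonempty (fun a' => Q1 s' a')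
        - Finset.univ.sup' Finset.univ_nonempty (fun a' => Q2 s' a')| ≤ dist Q1 Q2 := by
      intro s'
      apply abs_sup'_sub_sup'_le_of_forall
      intro a'
      have h1 : dist (Q1 s') (Q2 s') ≤ dist Q1 Q2 := dist_le_pi_dist Q1 Q2 s'
      have h2 : dist (Q1 s' a') (Q2 s' a') ≤ dist (Q1 s') (Q2 s') :=
        dist_le_pi_dist (Q1 s') (Q2 s') a'
      rw [Real.dist_eq] at h2
      linarith
    have : r s a + γ * (∑ s', P s a s' * Finset.univ.sup' Finset.univ_nonempty (fun a' => Q1 s' a'))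
        - (r s a + γ * (∑ s', P s a s' * Finset.univ.sup' Finset.univ_nonempty (fun a' => Q2 s' a')))
        = γ * ∑ s', P s a s' * (Finset.univ.sup' Finset.univ_nonempty (fun a' => Q1 s' a')
          - Finset.univ.sup' Finset.univ_nonempty (fun a' => Q2 s' a')) := by
      rw [show (∑ s', P s a s' * (Finset.univ.sup' Finset.univ_nonempty (fun a' => Q1 s' a')
          - Finset.univ.sup' Finset.univ_nonempty (fun a' => Q2 s' a')))
        = ∑ s', (P s a s' * Finset.univ.sup' Finset.univ_nonempty (fun a' => Q1 s' a')
          - P s a s' * Finset.univ.sup' Finset.univ_nonempty (fun a' => Q2 s' a')) from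
          Finset.sum_congr rfl (fun s' _ => by ring), Finset.sum_sub_distrib]
      ring
    rw [this, abs_mul, abs_of_nonneg hγ0]
    apply mul_le_mul_of_nonneg_left _ hγ0
    calc |∑ s', P s a s' * (Finset.univ.sup' Finset.univ_nonempty (fun a' => Q1 s' a')
          - Finset.univ.sup' Finset.univ_nonempty (fun a' => Q2 s' a'))|
        ≤ ∑ s', |P s a s' * (Finset.univ.sup' Finset.univ_nonempty (fun a' => Q1 s' a')
          - Finset.univ.sup' Finset.univ_nonempty (fun a' => Q2 s' a'))| :=
          Finset.abs_sum_le_sum_abs _ _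
      _ ≤ ∑ s', P s a s' * dist Q1 Q2 := by
          apply Finset.sum_le_sum
          intro s' _
          rw [abs_mul, abs_of_nonneg (hP0 s a s')]
          exact mul_le_mul_of_nonneg_left (habs s') (hP0 s a s')
      _ = dist Q1 Q2 := by rw [← Finset.sum_mul, hP1, one_mul]
  -- Uniqueness
  have uniq : ∀ Q1 Q2 : S → A → ℝ, T Q1 = Q1 → T Q2 = Q2 → Q1 = Q2 := by
    intro Q1 Q2 h1 h2
    have := key Q1 Q2
    rw [h1, h2] at this
    have hd : dist Q1 Q2 = 0 := by nlinarith [dist_nonneg (x := Q1) (y := Q2)]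
    exact dist_eq_zero.mp hd
  -- Existence via Banach fixed point
  have hlip : LipschitzWith ⟨γ, hγ0⟩ T := by
    apply LipschitzWith.of_dist_le_mul
    intro Q1 Q2
    exact key Q1 Q2
  have hcontr : ContractingWith ⟨γ, hγ0⟩ T := ⟨by exact_mod_cast hγ1, hlip⟩
  have hfix : ∃ Qstar : S → A → ℝ, T Qstar = Qstar :=
    ⟨ContractingWith.fixedPoint T hcontr, hcontr.fixedPoint_isFixedPt⟩
  obtain ⟨Q0, hQ0⟩ := hfix
  constructor
  · exact ⟨Q0, hQ0, fun Q' h' => uniq Q' Q0 h' hQ0⟩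
  · intro Qstar hQ s a
    set Q' : S → A → ℝ := fun s a => Qstar (gS s) (gA a) with hQ'def
    have hfix' : T Q' = Q' := by
      funext s a
      have hsup : ∀ s', Finset.univ.sup' Finset.univ_nonempty (fun a' => Q' s' a')
          = Finset.univ.sup' Finset.univ_nonempty (fun a' => Qstar (gS s') a') := by
        intro s'
        apply le_antisymm
        · apply Finset.sup'_le
          intro a' _
          exact Finset.le_sup' (fun a' => Qstar (gS s') a') (Finset.mem_univ (gA a'))
        · apply Finset.sup'_le
          intro a' _
          have : Qstar (gS s') a' = Q' s' (gA.symm a') := by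
            simp [hQ'def]
          rw [this]
          exact Finset.le_sup' (fun a' => Q' s' a') (Finset.mem_univ (gA.symm a'))
      have hsum : ∑ s', P s a s' * Finset.univ.sup' Finset.univ_nonempty (fun a' => Qstar (gS s') a')
          = ∑ t, P (gS s) (gA a) t * Finset.univ.sup' Finset.univ_nonempty (fun a' => Qstar t a') := by
        rw [← Equiv.sum_comp gS (fun t => P (gS s) (gA a) t *
          Finset.univ.sup' Finset.univ_nonempty (fun a' => Qstar t a'))]
        apply Finset.sum_congr rfl
        intro s' _
        rw [hPsym]
      calc T Q' s a = r s a + γ * ∑ s', P s a s' *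
            Finset.univ.sup' Finset.univ_nonempty (fun a' => Q' s' a') := hT Q' s a
        _ = r (gS s) (gA a) + γ * ∑ t, P (gS s) (gA a) t *
            Finset.univ.sup' Finset.univ_nonempty (fun a' => Qstar t a') := by
            rw [hr]
            congr 1
            congr 1
            rw [← hsum]
            apply Finset.sum_congr rfl
            intro s' _
            rw [hsup]
        _ = T Qstar (gS s) (gA a) := (hT Qstar (gS s) (gA a)).symm
        _ = Qstar (gS s) (gA a) := by rw [hQ]
        _ = Q' s a := rfl
    have := uniq Q' Qstar hfix' hQ
    exact congrFun (congrFun this s) a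
end

section
/- Let E be a real normed vector space, G a finite group, and ρ : G → (E →L[ℝ] E) a linear representation of G on E (i.e. ρ(1) = id and ρ(g h) = ρ(g) ∘ ρ(h)). Let p ∈ E and let L : E → ℝ be Fréchet differentiable at p with L (p + ρ(g) v) = L (p + v) for all g ∈ G and v ∈ E. If there exists v₀ ∈ E with fderiv ℝ L p v₀ < 0, then the averaged direction v̄ := ∑_{g ∈ G} ρ(g) v₀ satisfies both ρ(h) v̄ = v̄ for every h ∈ G (v̄ lies in the fixed subspace of the representation) and fderiv ℝ L p v̄ < 0. -/
/-- If `L` is differentiable at `p`, invariant at `p` under a linear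
representation `ρ` of a finite group `G` in the sense `L (p + ρ g v) = L (p + v)`, and
some direction `v₀` has negative directional derivative, then the averaged direction
`v̄ = ∑ g, ρ g v₀` is fixed by the representation and still has negative directional
derivative. -/
theorem averaged_descent_direction_fixed
    {E : Type*} [NormedAddCommGroup E] [NormedSpace ℝ E]
    {G : Type*} [Group G] [Fintype G]
    (ρ : G → E →L[ℝ] E)
    (hρ1 : ρ 1 = ContinuousLinearMap.id ℝ E)
    (hρm : ∀ g h : G, ρ (g * h) = (ρ g).comp (ρ h))
    (p : E) (L : E → ℝ) (hdiff : DifferentiableAt ℝ L p)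
    (hLinv : ∀ (g : G) (v : E), L (p + ρ g v) = L (p + v))
    (v₀ : E) (hneg : fderiv ℝ L p v₀ < 0) :
    (∀ h : G, ρ h (∑ g : G, ρ g v₀) = ∑ g : G, ρ g v₀) ∧
      fderiv ℝ L p (∑ g : G, ρ g v₀) < 0 := by
  have key : ∀ g : G, ∀ v : E, fderiv ℝ L p (ρ g v) = fderiv ℝ L p v := by
    intro g v
    -- the function x ↦ L (p + ρ g x) equals x ↦ L (p + x)
    have hfun : (fun x => L (p + ρ g x)) = (fun x => L (p + x)) := by
      funext x; exact hLinv g x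
    have h1 : DifferentiableAt ℝ (fun x : E => p + x) (0 : E) := by
      exact (differentiableAt_id.const_add p)
    have h2 : fderiv ℝ (fun x : E => L (p + x)) 0 =
        (fderiv ℝ L p).comp (ContinuousLinearMap.id ℝ E) := by
      have := fderiv_comp (𝕜 := ℝ) (0 : E) (g := L) (f := fun x : E => p + x)
        (by simpa using hdiff) h1
      have hid : fderiv ℝ (fun x : E => p + x) 0 = ContinuousLinearMap.id ℝ E := by
        rw [fderiv_const_add]; exact fderiv_id
      rw [hid] at this
      simpa [Function.comp_def] using this
    have h3 : fderiv ℝ (fun x : E => L (p + ρ g x)) 0 =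
        (fderiv ℝ L p).comp (ρ g) := by
      have hρd : DifferentiableAt ℝ (fun x : E => p + ρ g x) (0 : E) :=
        ((ρ g).differentiableAt).const_add p
      have := fderiv_comp (𝕜 := ℝ) (0 : E) (g := L) (f := fun x : E => p + ρ g x)
        (by simpa using hdiff) hρd
      have hgd : fderiv ℝ (fun x : E => p + ρ g x) 0 = ρ g := by
        rw [fderiv_const_add]
        exact (ρ g).fderiv
      rw [hgd] at this
      simpa [Function.comp_def] using this
    have : (fderiv ℝ L p).comp (ρ g) = (fderiv ℝ L p).comp (ContinuousLinearMap.id ℝ E) := by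
      rw [← h3, ← h2, hfun]
    have := congrArg (fun T : E →L[ℝ] ℝ => T v) this
    simpa using this
  constructor
  · intro h
    rw [map_sum]
    have : ∀ g : G, ρ h (ρ g v₀) = ρ (h * g) v₀ := by
      intro g; rw [hρm]; rfl
    calc ∑ g : G, ρ h (ρ g v₀) = ∑ g : G, ρ (h * g) v₀ := by
          exact Finset.sum_congr rfl fun g _ => this g
      _ = ∑ g : G, ρ g v₀ := Fintype.sum_equiv (Equiv.mulLeft h) _ _ (fun g => rfl)
  · rw [map_sum]
    have : ∀ g : G, fderiv ℝ L p (ρ g v₀) = fderiv ℝ L p v₀ := fun g => key g v₀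
    rw [Finset.sum_congr rfl fun g _ => this g, Finset.sum_const]
    have hcard : 0 < Fintype.card G := Fintype.card_pos
    simp only [Finset.card_univ, nsmul_eq_mul]
    exact mul_neg_of_pos_of_neg (by exact_mod_cast hcard) hneg
end

section
/- Let G be a finite group, E a real normed vector space, and ρ : G → (E →L[ℝ] E) a linear representation of G on E. Let S be a type equipped with a G-action, let d be a natural number, and let π assign to each g ∈ G a linear isometric equivalence π(g) of ℝ^d. Suppose Q : E → S → ℝ^d satisfies the equivariance law Q (ρ(g) ω) (g • s) = π(g) (Q ω s) for all g ∈ G, ω ∈ E, s ∈ S, and Q* : S → ℝ^d satisfies Q* (g • s) = π(g) (Q* s) for all g, s. Let B be a finite subset of S and define the symmetrized loss L(ω) := ∑_{g ∈ G} ∑_{s ∈ B} ‖Q ω (g • s) − Q* (g • s)‖². Then for every p ∈ E with ρ(g) p = p for all g ∈ G, every v ∈ E, and every g₀ ∈ G, one has L (p + ρ(g₀) v) = L (p + v). -/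
/-- If the network `Q` is equivariant for a representation `ρ` on its
weights, a `G`-action on states and isometric equivalences `π g` on output values, and
the target `Q*` is equivariant as well, then the symmetrized loss
`L ω = ∑ g, ∑ s ∈ B, ‖Q ω (g • s) − Q* (g • s)‖²` satisfies
`L (p + ρ g₀ v) = L (p + v)` for every fixed point `p` of the representation. -/
theorem symmetrized_loss_invariant
    {E : Type*} [NormedAddCommGroup E] [NormedSpace ℝ E]
    {G : Type*} [Group G] [Fintype G]
    (ρ : G → E →L[ℝ] E)
    (hρ1 : ρ 1 = ContinuousLinearMap.id ℝ E)
    (hρm : ∀ g h : G, ρ (g * h) = (ρ g).comp (ρ h))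
    {S : Type*} [MulAction G S] (d : ℕ)
    (π : G → (EuclideanSpace ℝ (Fin d) ≃ₗᵢ[ℝ] EuclideanSpace ℝ (Fin d)))
    (Q : E → S → EuclideanSpace ℝ (Fin d))
    (Qstar : S → EuclideanSpace ℝ (Fin d))
    (hQ : ∀ (g : G) (ω : E) (s : S), Q (ρ g ω) (g • s) = π g (Q ω s))
    (hQstar : ∀ (g : G) (s : S), Qstar (g • s) = π g (Qstar s))
    (B : Finset S) (p : E) (hp : ∀ g : G, ρ g p = p) (v : E) (g₀ : G) :
    ∑ g : G, ∑ s ∈ B, ‖Q (p + ρ g₀ v) (g • s) - Qstar (g • s)‖ ^ 2 =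
      ∑ g : G, ∑ s ∈ B, ‖Q (p + v) (g • s) - Qstar (g • s)‖ ^ 2 := by
  have hω : p + ρ g₀ v = ρ g₀ (p + v) := by rw [map_add, hp]
  rw [hω]
  refine Fintype.sum_equiv (Equiv.mulLeft g₀⁻¹) _ _ fun g => Finset.sum_congr rfl fun s _ => ?_
  have key : g • s = g₀ • ((g₀⁻¹ * g) • s) := by rw [← mul_smul, mul_inv_cancel_left]
  rw [key, hQ, hQstar, ← map_sub, (π g₀).norm_map, Equiv.coe_mulLeft]
end

section
/- Let X ⊆ ℝ^{d_x} and I ⊆ ℝ^{d_i} be compact, let k, m, C be natural numbers, and let F : (Fin k → X) × I × (Fin m → I) → ℝ^C be continuous. Then F is invariant to permutations of its first and third blocks, i.e. F (σ • x, i, τ • z) = F (x, i, z) for all permutations σ of Fin k and τ of Fin m and all inputs, if and only if there exist natural numbers p, q and continuous functions ξ_x : X → ℝ^p, ξ_i : I → ℝ^q, and H : ℝ^p × I × ℝ^q → ℝ^C such that F (x, i, z) = H (∑_{l ∈ Fin k} ξ_x (x l), i, ∑_{l ∈ Fin m} ξ_i (z l)) for all x ∈ (Fin k → X), i ∈ I,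 z ∈ (Fin m → I). -/
open Finset

private lemma dot_self_ne_zero {d : ℕ} {a : EuclideanSpace ℝ (Fin d)} (ha : a ≠ 0) :
    (∑ c, a c * a c) ≠ 0 := by
  intro h
  apply ha
  have h0 := (Finset.sum_eq_zero_iff_of_nonneg (fun c _ => mul_self_nonneg (a c))).1 h
  ext c
  exact mul_self_eq_zero.1 (h0 c (mem_univ c))

private lemma exists_dot_ne_zero {d : ℕ} :
    ∀ U : Finset (EuclideanSpace ℝ (Fin d)), (∀ u ∈ U, u ≠ 0) →
      ∃ w : Fin d → ℝ, ∀ u ∈ U, (∑ c, w c * u c) ≠ 0 := by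
  classical
  intro U
  induction U using Finset.induction_on with
  | empty => exact fun _ => ⟨0, by simp⟩
  | @insert a s ha ih =>
    intro h
    obtain ⟨w, hw⟩ := ih fun u hu => h u (Finset.mem_insert_of_mem hu)
    have haa : (∑ c, a c * a c) ≠ 0 := dot_self_ne_zero (h a (Finset.mem_insert_self a s))
    set B : Finset ℝ := insert (-(∑ c, w c * a c) / (∑ c, a c * a c))
        (s.image fun u => -(∑ c, w c * u c) / (∑ c, a c * u c)) with hB
    obtain ⟨t, ht⟩ := Infinite.exists_notMem_finset B
    have key : ∀ u : EuclideanSpace ℝ (Fin d),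
        (∑ c, (w c + t * a c) * u c) = (∑ c, w c * u c) + t * (∑ c, a c * u c) := by
      intro u
      rw [Finset.mul_sum, ← Finset.sum_add_distrib]
      exact Finset.sum_congr rfl fun c _ => by ring
    refine ⟨fun c => w c + t * a c, ?_⟩
    intro u hu
    rcases Finset.mem_insert.1 hu with rfl | hus
    · rw [key]
      intro hcontra
      apply ht
      have h1 : t = -(∑ c, w c * u c) / (∑ c, u c * u c) := by
        rw [eq_div_iff haa]; linarith
      rw [hB]
      exact Finset.mem_insert.2 (Or.inl h1)
    · rw [key]
      by_cases hau : (∑ c, a c * u c) = 0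
      · rw [hau, mul_zero, add_zero]; exact hw u hus
      · intro hcontra
        apply ht
        have h1 : t = -(∑ c, w c * u c) / (∑ c, a c * u c) := by
          rw [eq_div_iff hau]; linarith
        rw [hB]
        exact Finset.mem_insert_of_mem (Finset.mem_image.2 ⟨u, hus, h1.symm⟩)

private lemma exists_separating {d : ℕ} (A : Finset (EuclideanSpace ℝ (Fin d))) :
    ∃ w : Fin d → ℝ, ∀ a ∈ A, ∀ b ∈ A, (∑ c, w c * a c) = (∑ c, w c * b c) → a = b := by
  classical
  obtain ⟨w, hw⟩ := exists_dot_ne_zero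
      (((A ×ˢ A).filter fun p => p.1 ≠ p.2).image fun p => p.1 - p.2)
      (by
        rintro u hu
        obtain ⟨pq, hpq, rfl⟩ := Finset.mem_image.1 hu
        exact fun h0 => (Finset.mem_filter.1 hpq).2 (sub_eq_zero.1 h0))
  refine ⟨w, fun a ha b hb hab => ?_⟩
  by_contra hne
  refine hw (a - b) (Finset.mem_image.2 ⟨(a, b),
      Finset.mem_filter.2 ⟨Finset.mem_product.2 ⟨ha, hb⟩, hne⟩, rfl⟩) ?_
  have hsub : ∀ c, (a - b) c = a c - b c := fun c => rfl
  calc (∑ c, w c * (a - b) c) = ∑ c, (w c * a c - w c * b c) := by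
        refine Finset.sum_congr rfl fun c _ => ?_
        rw [hsub]; ring
    _ = (∑ c, w c * a c) - ∑ c, w c * b c := Finset.sum_sub_distrib _ _
    _ = 0 := by rw [hab, sub_self]

open Finset

private lemma multiset_eq_of_powersum {k : ℕ} (a b : Fin k → ℝ)
    (h : ∀ j, 1 ≤ j → j ≤ k → ∑ l, a l ^ j = ∑ l, b l ^ j) :
    Multiset.map a Finset.univ.val = Multiset.map b Finset.univ.val := by
  classical
  set s := Multiset.map a Finset.univ.val with hs
  set t := Multiset.map b Finset.univ.val with hts
  have hcards : Multiset.card s = k := by simp [hs]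
  have hcardt : Multiset.card t = k := by simp [hts]
  have hpsum : ∀ (f : Fin k → ℝ) (n : ℕ),
      MvPolynomial.aeval f (MvPolynomial.psum (Fin k) ℝ n) = ∑ l, f l ^ n := by
    intro f n
    simp [MvPolynomial.psum]
  have newton : ∀ (f : Fin k → ℝ) (j : ℕ),
      (j : ℝ) * (Multiset.map f Finset.univ.val).esymm j
        = (-1 : ℝ) ^ (j + 1) * ∑ p ∈ (antidiagonal j).filter (fun p => p.1 < j),
            (-1 : ℝ) ^ p.1 * (Multiset.map f Finset.univ.val).esymm p.1 * ∑ l, f l ^ p.2 := by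
    intro f j
    have hh := congrArg (MvPolynomial.aeval f) (MvPolynomial.mul_esymm_eq_sum (Fin k) ℝ j)
    simpa [map_sum, map_mul, map_pow, hpsum,
      MvPolynomial.aeval_esymm_eq_multiset_esymm] using hh
  have key : ∀ j, j ≤ k → s.esymm j = t.esymm j := by
    intro j
    induction j using Nat.strong_induction_on with
    | _ j ih =>
      intro hjk
      rcases Nat.eq_zero_or_pos j with rfl | hj
      · simp [Multiset.esymm]
      · have h1 := newton a j
        have h2 := newton b j
        rw [← hs] at h1
        rw [← hts] at h2
        have hsum : ∑ p ∈ (antidiagonal j).filter (fun p => p.1 < j),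
              (-1 : ℝ) ^ p.1 * s.esymm p.1 * ∑ l, a l ^ p.2
            = ∑ p ∈ (antidiagonal j).filter (fun p => p.1 < j),
              (-1 : ℝ) ^ p.1 * t.esymm p.1 * ∑ l, b l ^ p.2 := by
          refine Finset.sum_congr rfl fun p hp => ?_
          obtain ⟨hpa, hplt⟩ := Finset.mem_filter.1 hp
          have hadd : p.1 + p.2 = j := Finset.HasAntidiagonal.mem_antidiagonal.1 hpa
          rw [ih p.1 hplt (by omega), h p.2 (by omega) (by omega)]
        have hfin : (j : ℝ) * s.esymm j = (j : ℝ) * t.esymm j := by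
          rw [h1, hsum, ← h2]
        exact mul_left_cancel₀ (Nat.cast_ne_zero.2 (by omega)) hfin
  have hPQ : (s.map fun r => Polynomial.X - Polynomial.C r).prod
      = (t.map fun r => Polynomial.X - Polynomial.C r).prod := by
    apply Polynomial.ext
    intro n
    by_cases hn : n ≤ k
    · rw [Multiset.prod_X_sub_C_coeff s (by omega), Multiset.prod_X_sub_C_coeff t (by omega),
        hcards, hcardt, key (k - n) (Nat.sub_le _ _)]
    · rw [Polynomial.coeff_eq_zero_of_natDegree_lt, Polynomial.coeff_eq_zero_of_natDegree_lt] <;>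
        rw [Polynomial.natDegree_multiset_prod_X_sub_C_eq_card] <;> omega
  have hroots := congrArg Polynomial.roots hPQ
  rwa [Polynomial.roots_multiset_prod_X_sub_C, Polynomial.roots_multiset_prod_X_sub_C] at hroots

private lemma multiset_eq_of_map_eq {α β : Type*} [DecidableEq α] {f : α → β}
    (s t : Multiset α) (hf : Set.InjOn f {u | u ∈ s ∨ u ∈ t}) (h : s.map f = t.map f) :
    s = t := by
  classical
  ext a
  by_cases hsm : a ∈ s <;> by_cases htm : a ∈ t
  · have h1 := Multiset.count_map_eq_count f s (hf.mono fun u hu => Or.inl hu) a hsm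
    have h2 := Multiset.count_map_eq_count f t (hf.mono fun u hu => Or.inr hu) a htm
    rw [← h1, h, h2]
  · exfalso
    have : f a ∈ t.map f := h ▸ Multiset.mem_map_of_mem f hsm
    obtain ⟨u, hu, hf2⟩ := Multiset.mem_map.1 this
    exact htm (hf (Or.inr hu) (Or.inl hsm) hf2 ▸ hu)
  · exfalso
    have : f a ∈ s.map f := h ▸ Multiset.mem_map_of_mem f htm
    obtain ⟨u, hu, hf2⟩ := Multiset.mem_map.1 this
    exact hsm (hf (Or.inl hu) (Or.inr htm) hf2 ▸ hu)
  · rw [Multiset.count_eq_zero_of_notMem hsm, Multiset.count_eq_zero_of_notMem htm]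

private lemma exists_perm_of_multiset_map_eq {α : Type*} {k : ℕ} (x y : Fin k → α)
    (h : Multiset.map x Finset.univ.val = Multiset.map y Finset.univ.val) :
    ∃ σ : Equiv.Perm (Fin k), y = x ∘ σ := by
  classical
  have hcard : ∀ a : α, Fintype.card {i // y i = a} = Fintype.card {i // x i = a} := by
    intro a
    have hc : Multiset.count a (Multiset.map x Finset.univ.val)
        = Multiset.count a (Multiset.map y Finset.univ.val) := by rw [h]
    rw [Multiset.count_map, Multiset.count_map] at hc
    rw [Fintype.card_subtype, Fintype.card_subtype]
    have e1 : ∀ (f : Fin k → α), (Finset.univ.filter fun i => f i = a).card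
        = Multiset.card (Multiset.filter (fun i => a = f i) Finset.univ.val) := by
      intro f
      have h2 : (Finset.univ.filter fun i => f i = a) = (Finset.univ.filter fun i => a = f i) := by
        simp [eq_comm]
      rw [h2]
      rfl
    rw [e1, e1, ← hc]
  let e : ∀ a : α, {i // y i = a} ≃ {i // x i = a} := fun a => Fintype.equivOfCardEq (hcard a)
  exact ⟨Equiv.ofFiberEquiv e, funext fun i => (Equiv.ofFiberEquiv_map e i).symm⟩

open Finset

private lemma euclid_sum_apply {n : ℕ} {γ : Type*} (sf : Finset γ)
    (f : γ → EuclideanSpace ℝ (Fin n)) (c : Fin n) :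
    (∑ l ∈ sf, f l) c = ∑ l ∈ sf, f l c := by
  classical
  induction sf using Finset.cons_induction with
  | empty => rfl
  | cons a s ha ih =>
    rw [Finset.sum_cons, Finset.sum_cons, ← ih]
    rfl

private lemma exists_moment_map (d k : ℕ) :
    ∃ (p : ℕ) (η : EuclideanSpace ℝ (Fin d) → EuclideanSpace ℝ (Fin p)),
      Continuous η ∧ ∀ x y : Fin k → EuclideanSpace ℝ (Fin d),
        ∑ l, η (x l) = ∑ l, η (y l) → ∃ σ : Equiv.Perm (Fin k), y = x ∘ σ := by
  classical
  set ι := Σ j : Fin (k + 1), (Fin (j : ℕ) → Fin d) with hι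
  let e := Fintype.equivFin ι
  refine ⟨Fintype.card ι, fun v => (EuclideanSpace.equiv (Fin (Fintype.card ι)) ℝ).symm
      (fun c => ∏ i, v ((e.symm c).2 i)), ?_, ?_⟩
  · refine (EuclideanSpace.equiv (Fin (Fintype.card ι)) ℝ).symm.continuous.comp ?_
    refine continuous_pi fun c => ?_
    refine continuous_finset_prod _ fun i _ => ?_
    exact (continuous_apply ((e.symm c).2 i)).comp (EuclideanSpace.equiv (Fin d) ℝ).continuous
  · intro x y hxy
    have hcoord : ∀ idx : ι, ∑ l, ∏ i, x l (idx.2 i) = ∑ l, ∏ i, y l (idx.2 i) := by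
      intro idx
      have hc := congrArg (fun v : EuclideanSpace ℝ (Fin (Fintype.card ι)) => v (e idx)) hxy
      simp only [euclid_sum_apply, EuclideanSpace.equiv, PiLp.coe_symm_continuousLinearEquiv,
        PiLp.toLp_apply] at hc
      have heq := e.symm_apply_apply idx
      rw [heq] at hc
      exact hc
    have hpow : ∀ (w : Fin d → ℝ) (j : ℕ), j ≤ k →
        ∑ l, (∑ c, w c * x l c) ^ j = ∑ l, (∑ c, w c * y l c) ^ j := by
      intro w j hj
      have expand : ∀ u : Fin k → EuclideanSpace ℝ (Fin d),
          ∑ l, (∑ c, w c * u l c) ^ j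
            = ∑ f : Fin j → Fin d, (∏ i, w (f i)) * ∑ l, ∏ i, u l (f i) := by
        intro u
        calc ∑ l, (∑ c, w c * u l c) ^ j
            = ∑ l, ∑ f : Fin j → Fin d, ∏ i, (w (f i) * u l (f i)) := by
              exact Finset.sum_congr rfl fun l _ => Fintype.sum_pow _ j
          _ = ∑ f : Fin j → Fin d, ∑ l, (∏ i, w (f i)) * ∏ i, u l (f i) := by
              rw [Finset.sum_comm]
              exact Finset.sum_congr rfl fun f _ =>
                Finset.sum_congr rfl fun l _ => Finset.prod_mul_distrib
          _ = ∑ f : Fin j → Fin d, (∏ i, w (f i)) * ∑ l, ∏ i, u l (f i) := by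
              exact Finset.sum_congr rfl fun f _ => (Finset.mul_sum _ _ _).symm
      rw [expand x, expand y]
      refine Finset.sum_congr rfl fun f _ => ?_
      have hc : ∑ l, ∏ i, x l (f i) = ∑ l, ∏ i, y l (f i) :=
        hcoord ⟨⟨j, Nat.lt_succ_of_le hj⟩, f⟩
      rw [hc]
    -- separating functional
    set A : Finset (EuclideanSpace ℝ (Fin d)) :=
      (Finset.univ.image x) ∪ (Finset.univ.image y) with hA
    obtain ⟨w, hw⟩ := exists_separating A
    set L : EuclideanSpace ℝ (Fin d) → ℝ := fun v => ∑ c, w c * v c with hL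
    have hmap : (Multiset.map x Finset.univ.val).map L
        = (Multiset.map y Finset.univ.val).map L := by
      rw [Multiset.map_map, Multiset.map_map]
      exact multiset_eq_of_powersum (L ∘ x) (L ∘ y) fun j h1 h2 => hpow w j h2
    have hst : Multiset.map x Finset.univ.val = Multiset.map y Finset.univ.val := by
      refine multiset_eq_of_map_eq _ _ ?_ hmap
      intro u hu v hv huv
      refine hw u ?_ v ?_ huv
      · rcases hu with hu | hu <;>
          obtain ⟨l, _, rfl⟩ := Multiset.mem_map.1 hu
        · exact Finset.mem_union_left _ (Finset.mem_image.2 ⟨l, Finset.mem_univ l, rfl⟩)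
        · exact Finset.mem_union_right _ (Finset.mem_image.2 ⟨l, Finset.mem_univ l, rfl⟩)
      · rcases hv with hv | hv <;>
          obtain ⟨l, _, rfl⟩ := Multiset.mem_map.1 hv
        · exact Finset.mem_union_left _ (Finset.mem_image.2 ⟨l, Finset.mem_univ l, rfl⟩)
        · exact Finset.mem_union_right _ (Finset.mem_image.2 ⟨l, Finset.mem_univ l, rfl⟩)
    exact exists_perm_of_multiset_map_eq x y hst



/-- A continuous function `F` on `(Fin k → X) × I × (Fin m → I)` with
`X`, `I` compact is invariant to permutations of its first and third blocks iff it can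
be written as `F (x, i, z) = H (∑ l, ξx (x l), i, ∑ l, ξi (z l))` for continuous
functions `ξx`, `ξi`, `H`. -/
theorem perm_invariant_iff_sum_decomposition
    {dx di : ℕ} (X : Set (EuclideanSpace ℝ (Fin dx)))
    (I : Set (EuclideanSpace ℝ (Fin di)))
    (hX : IsCompact X) (hI : IsCompact I)
    (k m C : ℕ)
    (F : (Fin k → X) × I × (Fin m → I) → EuclideanSpace ℝ (Fin C))
    (hF : Continuous F) :
    (∀ (σ : Equiv.Perm (Fin k)) (τ : Equiv.Perm (Fin m))
        (x : Fin k → X) (i : I) (z : Fin m → I),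
        F (fun j => x (σ⁻¹ j), i, fun j => z (τ⁻¹ j)) = F (x, i, z)) ↔
      ∃ (p q : ℕ) (ξx : X → EuclideanSpace ℝ (Fin p))
          (ξi : I → EuclideanSpace ℝ (Fin q))
          (H : EuclideanSpace ℝ (Fin p) × I × EuclideanSpace ℝ (Fin q) →
            EuclideanSpace ℝ (Fin C)),
        Continuous ξx ∧ Continuous ξi ∧ Continuous H ∧
          ∀ (x : Fin k → X) (i : I) (z : Fin m → I),
            F (x, i, z) = H (∑ l, ξx (x l), i, ∑ l, ξi (z l)) := by
  constructor
  · -- forward direction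
    intro hinv
    classical
    obtain ⟨p, η, hηc, hηinj⟩ := exists_moment_map dx k
    obtain ⟨q, θ, hθc, hθinj⟩ := exists_moment_map di m
    haveI : CompactSpace X := isCompact_iff_compactSpace.mp hX
    haveI : CompactSpace I := isCompact_iff_compactSpace.mp hI
    set ξx : X → EuclideanSpace ℝ (Fin p) := fun v => η ↑v with hξx
    set ξi : I → EuclideanSpace ℝ (Fin q) := fun v => θ ↑v with hξi
    set Φ : ((Fin k → X) × I × (Fin m → I)) →
        EuclideanSpace ℝ (Fin p) × I × EuclideanSpace ℝ (Fin q) :=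
      fun v => (∑ l, ξx (v.1 l), v.2.1, ∑ l, ξi (v.2.2 l)) with hΦ
    have hΦc : Continuous Φ := by
      refine Continuous.prodMk ?_ (Continuous.prodMk (continuous_fst.comp continuous_snd) ?_)
      · exact continuous_finset_sum _ fun l _ => hηc.comp
          (continuous_subtype_val.comp ((continuous_apply l).comp continuous_fst))
      · exact continuous_finset_sum _ fun l _ => hθc.comp
          (continuous_subtype_val.comp ((continuous_apply l).comp
            (continuous_snd.comp continuous_snd)))
    have hsame : ∀ v v', Φ v = Φ v' → F v = F v' := by
      rintro ⟨x, i, z⟩ ⟨x', i', z'⟩ hvv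
      have h1 : ∑ l, ξx (x l) = ∑ l, ξx (x' l) := congrArg Prod.fst hvv
      have h2 : i = i' := congrArg (fun u => u.2.1) hvv
      have h3 : ∑ l, ξi (z l) = ∑ l, ξi (z' l) := congrArg (fun u => u.2.2) hvv
      obtain ⟨σ, hσ⟩ := hηinj (fun l => ↑(x l)) (fun l => ↑(x' l)) h1
      obtain ⟨τ, hτ⟩ := hθinj (fun l => ↑(z l)) (fun l => ↑(z' l)) h3
      have hx' : x' = fun j => x (σ j) := funext fun j => Subtype.ext (congrFun hσ j)
      have hz' : z' = fun j => z (τ j) := funext fun j => Subtype.ext (congrFun hτ j)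
      subst h2
      rw [hx', hz']
      have hi := hinv σ⁻¹ τ⁻¹ x i z
      simp only [inv_inv] at hi
      exact hi.symm
    set K := Set.range Φ with hK
    have hKcomp : IsCompact K := isCompact_range hΦc
    set Φ' : ((Fin k → X) × I × (Fin m → I)) → K := fun v => ⟨Φ v, Set.mem_range_self v⟩
      with hΦ'
    have hΦ'c : Continuous Φ' := hΦc.subtype_mk _
    have hΦ'surj : Function.Surjective Φ' := by
      rintro ⟨u, v, rfl⟩
      exact ⟨v, rfl⟩
    have hquot : Topology.IsQuotientMap Φ' := (hΦ'c.isClosedMap).isQuotientMap hΦ'c hΦ'surj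
    set H₀ : K → EuclideanSpace ℝ (Fin C) := fun w => F (Classical.choose w.2) with hH₀def
    have hH₀ : ∀ v, H₀ (Φ' v) = F v := fun v => hsame _ _ (Classical.choose_spec (Φ' v).2)
    have hH₀c : Continuous H₀ := by
      rw [hquot.continuous_iff]
      have : (H₀ ∘ Φ') = F := funext hH₀
      rw [this]
      exact hF
    obtain ⟨H, hH⟩ := ContinuousMap.exists_restrict_eq hKcomp.isClosed
      (⟨H₀, hH₀c⟩ : C(K, EuclideanSpace ℝ (Fin C)))
    refine ⟨p, q, ξx, ξi, ⇑H, hηc.comp continuous_subtype_val,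
      hθc.comp continuous_subtype_val, H.continuous, ?_⟩
    intro x i z
    have hr := congrFun (congrArg DFunLike.coe hH) (Φ' (x, i, z))
    rw [ContinuousMap.restrict_apply] at hr
    calc F (x, i, z) = H₀ (Φ' (x, i, z)) := (hH₀ (x, i, z)).symm
      _ = H ↑(Φ' (x, i, z)) := hr.symm
      _ = H (∑ l, ξx (x l), i, ∑ l, ξi (z l)) := rfl
  · -- reverse direction
    rintro ⟨p, q, ξx, ξi, H, hξx, hξi, hH, hrep⟩ σ τ x i z
    rw [hrep (fun j => x (σ⁻¹ j)) i (fun j => z (τ⁻¹ j)), hrep x i z]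
    have e1 : ∑ l, ξx (x (σ⁻¹ l)) = ∑ l, ξx (x l) := Equiv.sum_comp σ⁻¹ fun l => ξx (x l)
    have e2 : ∑ l, ξi (z (τ⁻¹ l)) = ∑ l, ξi (z l) := Equiv.sum_comp τ⁻¹ fun l => ξi (z l)
    rw [e1, e2]
end

section
/- Let X ⊆ ℝ^{d_x} and I ⊆ ℝ^{d_i} be compact, let k, C be natural numbers and m ≥ 1, and let Q : (Fin k → X) × (Fin m → I) → (Fin m → ℝ^C) be continuous and equi-invariant, i.e. Q (σ • x, τ • z) = τ • (Q (x, z)) for all permutations σ of Fin k and τ of Fin m. Then there exist natural numbers p, q and continuous functions ξ_x : X → ℝ^p, ξ_i : I → ℝ^q, and H : ℝ^p × I × ℝ^q → ℝ^C such that for all x ∈ (Fin k → X), z ∈ (Fin m → I), and j ∈ Fin m, the j-th output row satisfies (Q (x, z)) j = H (∑_{l ∈ Fin k} ξ_x (x l), z j, ∑_{l ≠ j} ξ_i (z l)). -/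
open Finset MvPolynomial

private lemma poly_sum_eq' {d n : ℕ} (u v : Fin n → EuclideanSpace ℝ (Fin d))
    (h : ∀ α : Fin d → ℕ, (∀ j, α j ≤ 4*n) → ∑ i, ∏ j, u i j ^ α j = ∑ i, ∏ j, v i j ^ α j)
    (P : MvPolynomial (Fin d) ℝ) (hP : P.totalDegree ≤ 4*n) :
    ∑ i, MvPolynomial.eval (u i) P = ∑ i, MvPolynomial.eval (v i) P := by
  simp only [MvPolynomial.eval_eq']
  rw [Finset.sum_comm, Finset.sum_comm (s := Finset.univ)]
  refine Finset.sum_congr rfl fun α hα => ?_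
  rw [← Finset.mul_sum, ← Finset.mul_sum]
  congr 1
  refine h α fun j => ?_
  have h1 : α j ≤ α.sum fun _ e => e := by
    by_cases hj : j ∈ α.support
    · exact Finset.single_le_sum (f := fun i => α i) (fun i _ => Nat.zero_le _) hj
    · simp [Finsupp.notMem_support_iff.mp hj]
  exact h1.trans ((le_totalDegree hα).trans hP)

private lemma key_perm {d n : ℕ} (u v : Fin n → EuclideanSpace ℝ (Fin d))
    (h : ∀ α : Fin d → ℕ, (∀ j, α j ≤ 4*n) → ∑ i, ∏ j, u i j ^ α j = ∑ i, ∏ j, v i j ^ α j) :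
    ∃ σ : Equiv.Perm (Fin n), ∀ i, v i = u (σ i) := by
  classical
  set S : Finset (EuclideanSpace ℝ (Fin d)) := (Finset.univ.image u) ∪ (Finset.univ.image v) with hS
  have hu : ∀ i, u i ∈ S := fun i => Finset.mem_union_left _ (Finset.mem_image_of_mem u (Finset.mem_univ i))
  have hv : ∀ i, v i ∈ S := fun i => Finset.mem_union_right _ (Finset.mem_image_of_mem v (Finset.mem_univ i))
  have hcount : ∀ a : EuclideanSpace ℝ (Fin d), (Finset.univ.filter (fun i => u i = a)).card
      = (Finset.univ.filter (fun i => v i = a)).card := by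
    intro a
    by_cases haS : a ∈ S
    · set P : MvPolynomial (Fin d) ℝ :=
        ∏ b ∈ S.erase a, (∑ j, (MvPolynomial.X j - MvPolynomial.C (b j))^2) with hP
      have hfac : ∀ b : EuclideanSpace ℝ (Fin d), (∑ j, (MvPolynomial.X (R := ℝ) j - MvPolynomial.C (b j))^2).totalDegree ≤ 2 := by
        intro b
        refine (MvPolynomial.totalDegree_finset_sum _ _).trans ?_
        refine Finset.sup_le fun j _ => ?_
        refine (MvPolynomial.totalDegree_pow _ _).trans ?_
        have : (MvPolynomial.X (R := ℝ) j - MvPolynomial.C (b j)).totalDegree ≤ 1 := by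
          rw [sub_eq_add_neg, ← MvPolynomial.C_neg]
          refine (MvPolynomial.totalDegree_add _ _).trans ?_
          simp [MvPolynomial.totalDegree_X, MvPolynomial.totalDegree_C]
        omega
      have hdeg : P.totalDegree ≤ 4*n := by
        refine (MvPolynomial.totalDegree_finset_prod _ _).trans ?_
        refine le_trans (Finset.sum_le_sum fun b _ => hfac b) ?_
        rw [Finset.sum_const, smul_eq_mul]
        have h2 : S.card ≤ 2 * n := by
          rw [hS]
          refine (Finset.card_union_le _ _).trans ?_
          have c1 := Finset.card_image_le (s := (Finset.univ : Finset (Fin n))) (f := u)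
          have c2 := Finset.card_image_le (s := (Finset.univ : Finset (Fin n))) (f := v)
          simp only [Finset.card_univ, Fintype.card_fin] at c1 c2
          omega
        have h3 : (S.erase a).card ≤ 2 * n := (Finset.card_erase_le).trans h2
        omega
      have heval : ∀ c : EuclideanSpace ℝ (Fin d), MvPolynomial.eval c P = ∏ b ∈ S.erase a, ∑ j, (c j - b j)^2 := by
        intro c; simp [hP]
      have hzero : ∀ c ∈ S, c ≠ a → MvPolynomial.eval c P = 0 := by
        intro c hc hca
        rw [heval]
        refine Finset.prod_eq_zero (Finset.mem_erase.mpr ⟨hca, hc⟩) ?_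
        simp
      have hpos : 0 < MvPolynomial.eval a P := by
        rw [heval]
        refine Finset.prod_pos fun b hb => ?_
        have hba : b ≠ a := (Finset.mem_erase.mp hb).1
        have : ∃ j, a j ≠ b j := by
          by_contra hco
          push_neg at hco
          exact hba (PiLp.ext fun j => (hco j).symm)
        obtain ⟨j, hj⟩ := this
        refine Finset.sum_pos' (fun i _ => sq_nonneg _) ⟨j, Finset.mem_univ j, ?_⟩
        have : a j - b j ≠ 0 := sub_ne_zero.mpr hj
        positivity
      have hsum : ∀ w : Fin n → EuclideanSpace ℝ (Fin d), (∀ i, w i ∈ S) →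
          ∑ i, MvPolynomial.eval (w i) P
            = (Finset.univ.filter (fun i => w i = a)).card * MvPolynomial.eval a P := by
        intro w hw
        rw [← Finset.sum_filter_add_sum_filter_not Finset.univ (fun i => w i = a)]
        have e1 : ∑ i ∈ Finset.univ.filter (fun i => w i = a), MvPolynomial.eval (w i) P
            = (Finset.univ.filter (fun i => w i = a)).card * MvPolynomial.eval a P := by
          rw [Finset.sum_congr rfl (fun i hi => by rw [(Finset.mem_filter.mp hi).2]),
            Finset.sum_const, nsmul_eq_mul]
        have e2 : ∑ i ∈ Finset.univ.filter (fun i => ¬ w i = a), MvPolynomial.eval (w i) P = 0 := by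
          refine Finset.sum_eq_zero fun i hi => hzero _ (hw i) (Finset.mem_filter.mp hi).2
        rw [e1, e2, add_zero]
      have := poly_sum_eq' u v h P hdeg
      rw [hsum u hu, hsum v hv] at this
      exact_mod_cast mul_right_cancel₀ (ne_of_gt hpos) this
    · rw [Finset.filter_false_of_mem (fun i _ hia => haS (by rw [← hia]; exact hu i)),
        Finset.filter_false_of_mem (fun i _ hia => haS (by rw [← hia]; exact hv i))]
  have hcard : ∀ c : EuclideanSpace ℝ (Fin d), Fintype.card {i // v i = c} = Fintype.card {i // u i = c} := by
    intro c
    simp only [Fintype.card_subtype]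
    exact (hcount c).symm
  exact ⟨Equiv.ofFiberEquiv (fun c => Fintype.equivOfCardEq (hcard c)),
    fun i => (Equiv.ofFiberEquiv_map _ i).symm⟩

/-- feature maps on a subset of Euclidean space: all monomials with exponents ≤ N. -/
private lemma feature_exists {d N : ℕ} (X : Set (EuclideanSpace ℝ (Fin d))) :
    ∃ ξ : X → EuclideanSpace ℝ (Fin (Fintype.card (Fin d → Fin (N+1)))),
      Continuous ξ ∧ ∀ x : X, ∀ a : Fin d → Fin (N+1),
        ξ x (Fintype.equivFin _ a) = ∏ j, ((x : EuclideanSpace ℝ (Fin d)) j) ^ (a j : ℕ) := by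
  set e := Fintype.equivFin (Fin d → Fin (N+1))
  refine ⟨fun x => (WithLp.toLp 2 (fun i => ∏ j, ((x : EuclideanSpace ℝ (Fin d)) j) ^ ((e.symm i) j : ℕ)) :
      EuclideanSpace ℝ (Fin _)), ?_, ?_⟩
  · refine (PiLp.continuous_toLp 2 _).comp ?_
    apply continuous_pi
    intro i
    refine continuous_finset_prod _ fun j _ => ?_
    exact ((PiLp.continuous_apply 2 _ j).comp continuous_subtype_val).pow _
  · intro x a
    simp [e]

/-- from equality of summed features, get a permutation matching the tuples. -/
private lemma perm_of_feature_sum {d n N : ℕ} (hn : 4*n ≤ N) {X : Set (EuclideanSpace ℝ (Fin d))}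
    (ξ : X → EuclideanSpace ℝ (Fin (Fintype.card (Fin d → Fin (N+1)))))
    (hξ : ∀ x : X, ∀ a : Fin d → Fin (N+1),
        ξ x (Fintype.equivFin _ a) = ∏ j, ((x : EuclideanSpace ℝ (Fin d)) j) ^ (a j : ℕ))
    (x x' : Fin n → X) (hsum : ∑ l, ξ (x l) = ∑ l, ξ (x' l)) :
    ∃ σ : Equiv.Perm (Fin n), ∀ i, x' i = x (σ i) := by
  have hkey : ∀ α : Fin d → ℕ, (∀ j, α j ≤ 4*n) →
      ∑ i, ∏ j, ((x i : EuclideanSpace ℝ (Fin d)) j) ^ α j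
        = ∑ i, ∏ j, ((x' i : EuclideanSpace ℝ (Fin d)) j) ^ α j := by
    intro α hα
    have hb : ∀ j, α j < N + 1 := fun j => Nat.lt_succ_of_le ((hα j).trans hn)
    set a : Fin d → Fin (N+1) := fun j => ⟨α j, hb j⟩ with ha
    have := congrFun (congrArg WithLp.ofLp hsum) (Fintype.equivFin _ a)
    rw [WithLp.ofLp_sum, WithLp.ofLp_sum, Finset.sum_apply, Finset.sum_apply] at this
    simp only [hξ] at this
    simpa [ha] using this
  obtain ⟨σ, hσ⟩ := key_perm _ _ hkey
  exact ⟨σ, fun i => Subtype.ext (hσ i)⟩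

/-- A continuous, equi-invariant function
`Q : (Fin k → X) × (Fin m → I) → (Fin m → ℝ^C)` (invariant to permutations of the first
block, equivariant to permutations of the second) on compact `X`, `I` with `m ≥ 1`
admits a row-wise decomposition
`(Q (x, z)) j = H (∑ l, ξx (x l), z j, ∑_{l ≠ j} ξi (z l))` with continuous
`ξx`, `ξi`, `H`. -/
theorem equi_invariant_row_decomposition
    {dx di : ℕ} (X : Set (EuclideanSpace ℝ (Fin dx)))
    (I : Set (EuclideanSpace ℝ (Fin di)))
    (hX : IsCompact X) (hI : IsCompact I)
    (k m C : ℕ) (hm : 1 ≤ m)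
    (Q : (Fin k → X) × (Fin m → I) → (Fin m → EuclideanSpace ℝ (Fin C)))
    (hQcont : Continuous Q)
    (hQei : ∀ (σ : Equiv.Perm (Fin k)) (τ : Equiv.Perm (Fin m))
        (x : Fin k → X) (z : Fin m → I),
        Q (fun j => x (σ⁻¹ j), fun j => z (τ⁻¹ j)) = fun j => Q (x, z) (τ⁻¹ j)) :
    ∃ (p q : ℕ) (ξx : X → EuclideanSpace ℝ (Fin p))
        (ξi : I → EuclideanSpace ℝ (Fin q))
        (H : EuclideanSpace ℝ (Fin p) × I × EuclideanSpace ℝ (Fin q) →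
          EuclideanSpace ℝ (Fin C)),
      Continuous ξx ∧ Continuous ξi ∧ Continuous H ∧
        ∀ (x : Fin k → X) (z : Fin m → I) (j : Fin m),
          Q (x, z) j = H (∑ l, ξx (x l), z j, ∑ l ∈ Finset.univ.erase j, ξi (z l)) := by
  classical
  obtain ⟨m', rfl⟩ : ∃ m', m = m' + 1 := ⟨m - 1, (Nat.succ_pred_eq_of_pos hm).symm⟩
  obtain ⟨ξx, hξxc, hξx⟩ := feature_exists (N := 4*k) X
  obtain ⟨ξi, hξic, hξi⟩ := feature_exists (N := 4*m') I
  haveI : CompactSpace X := isCompact_iff_compactSpace.mp hX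
  haveI : CompactSpace I := isCompact_iff_compactSpace.mp hI
  set T := EuclideanSpace ℝ (Fin (Fintype.card (Fin dx → Fin (4*k+1)))) × ↥I × EuclideanSpace ℝ (Fin (Fintype.card (Fin di → Fin (4*m'+1)))) with hT
  set Ω := ((Fin k → ↥X) × (Fin (m'+1) → ↥I)) × Fin (m'+1) with hΩ
  set Φ : Ω → T := fun ω =>
    (∑ l, ξx (ω.1.1 l), ω.1.2 ω.2, ∑ l ∈ Finset.univ.erase ω.2, ξi (ω.1.2 l)) with hΦ
  set F : Ω → EuclideanSpace ℝ (Fin C) := fun ω => Q ω.1 ω.2 with hF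
  have hΦc : Continuous Φ := by
    rw [hΦ]
    refine continuous_prod_of_discrete_right.mpr fun j => ?_
    have c1 : Continuous fun w : (Fin k → ↥X) × (Fin (m'+1) → ↥I) => ∑ l, ξx (w.1 l) :=
      continuous_finset_sum _ fun l _ => hξxc.comp ((continuous_apply l).comp continuous_fst)
    have c2 : Continuous fun w : (Fin k → ↥X) × (Fin (m'+1) → ↥I) => w.2 j :=
      (continuous_apply j).comp continuous_snd
    have c3 : Continuous fun w : (Fin k → ↥X) × (Fin (m'+1) → ↥I) =>
        ∑ l ∈ Finset.univ.erase j, ξi (w.2 l) :=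
      continuous_finset_sum _ fun l _ => hξic.comp ((continuous_apply l).comp continuous_snd)
    exact c1.prodMk (c2.prodMk c3)
  have hFc : Continuous F := by
    rw [hF]
    refine continuous_prod_of_discrete_right.mpr fun j => ?_
    exact (continuous_apply j).comp hQcont
  -- erase sums as succAbove sums
  have herase : ∀ (z : Fin (m'+1) → ↥I) (j : Fin (m'+1)),
      ∑ l ∈ Finset.univ.erase j, ξi (z l) = ∑ t : Fin m', ξi (z (j.succAbove t)) := by
    intro z j
    have h1 := Fin.sum_univ_succAbove (fun l => ξi (z l)) j
    have h2 := Finset.add_sum_erase Finset.univ (fun l => ξi (z l)) (Finset.mem_univ j)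
    rw [← h2] at h1
    exact add_left_cancel h1
  -- the factorization property
  have hfac : ∀ a b : Ω, Φ a = Φ b → F a = F b := by
    rintro ⟨⟨x, z⟩, j⟩ ⟨⟨x', z'⟩, j'⟩ hab
    rw [hΦ, Prod.ext_iff, Prod.ext_iff] at hab
    obtain ⟨h1, h2, h3⟩ := hab
    simp only at h1 h2 h3
    obtain ⟨σ, hσ⟩ := perm_of_feature_sum (le_refl _) ξx hξx x x' h1
    rw [herase z j, herase z' j'] at h3
    obtain ⟨ρ, hρ⟩ := perm_of_feature_sum (by omega) ξi hξi
      (fun t => z (j.succAbove t)) (fun t => z' (j'.succAbove t)) h3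
    set τ : Equiv.Perm (Fin (m'+1)) :=
      (finSuccEquiv' j').trans ((Equiv.optionCongr ρ).trans (finSuccEquiv' j).symm) with hτ
    have hτj : τ j' = j := by simp [hτ]
    have hτs : ∀ t, τ (j'.succAbove t) = j.succAbove (ρ t) := by intro t; simp [hτ]
    have hzτ : ∀ l, z' l = z (τ l) := by
      intro l
      by_cases hl : l = j'
      · subst hl; rw [hτj]; exact h2.symm
      · obtain ⟨t, rfl⟩ := Fin.exists_succAbove_eq hl
        rw [hτs t]
        exact hρ t
    have hQ := hQei σ⁻¹ τ⁻¹ x z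
    simp only [inv_inv] at hQ
    have hx' : x' = fun a => x (σ a) := funext hσ
    have hz' : z' = fun a => z (τ a) := funext hzτ
    rw [hF]
    simp only
    rw [hx', hz', hQ]
    show Q (x, z) j = Q (x, z) (τ j')
    rw [hτj]
  -- quotient construction
  have hT2 : T2Space T := by infer_instance
  set K : Set T := Set.range Φ with hK
  have hKc : IsCompact K := isCompact_range hΦc
  set Φ' : Ω → K := fun ω => ⟨Φ ω, Set.mem_range_self ω⟩ with hΦ'
  have hΦ'c : Continuous Φ' := hΦc.subtype_mk _
  have hΦ's : Function.Surjective Φ' := by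
    rintro ⟨y, ω, rfl⟩; exact ⟨ω, rfl⟩
  have hqm : Topology.IsQuotientMap Φ' := Topology.IsQuotientMap.of_surjective_continuous hΦ's hΦ'c
  set H₀ : K → EuclideanSpace ℝ (Fin C) := fun y => F (Classical.choose y.2) with hH₀
  have hH₀Φ : ∀ ω : Ω, H₀ (Φ' ω) = F ω := by
    intro ω
    exact hfac _ _ (Classical.choose_spec (Φ' ω).2)
  have hH₀c : Continuous H₀ := by
    rw [Topology.IsQuotientMap.continuous_iff hqm]
    have : H₀ ∘ Φ' = F := funext hH₀Φ
    rw [this]; exact hFc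
  obtain ⟨G, hG⟩ := ContinuousMap.exists_restrict_eq (Y := EuclideanSpace ℝ (Fin C))
    hKc.isClosed (⟨H₀, hH₀c⟩ : C(K, EuclideanSpace ℝ (Fin C)))
  refine ⟨_, _, ξx, ξi, G, hξxc, hξic, G.continuous, ?_⟩
  intro x z j
  have h1 : G (Φ ((x, z), j)) = F ((x, z), j) := by
    have := ContinuousMap.congr_fun hG (Φ' ((x, z), j))
    simp only [ContinuousMap.restrict_apply] at this
    rw [← hH₀Φ ((x, z), j)]
    exact this
  exact h1.symm
end

section
/- Let α and Y be types, let n be a natural number and N = n + 1, and let Q : (Fin N → α) → (Fin N → Y) be permutation equivariant, i.e. Q (σ • z) = σ • (Q z) for every permutation σ of Fin N and every z : Fin N → α. Then there exists a single shared function F : α × (Fin n → α) → Y such that F is invariant to permutations of its second argument, i.e. F (a, τ • w) = F (a, w) for every permutation τ of Fin n, and such that every output row of Q is computed by F applied to the corresponding input entry and the remaining entries: (Q z) j = F (z j, fun l => z (j.succAbove l)) for all z : Fin N → α and j : Fin N. -/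
private def permAux {n : ℕ} (j : Fin (n + 1)) (τ : Equiv.Perm (Fin n)) :
    Equiv.Perm (Fin (n + 1)) :=
  (finSuccEquiv' 0).trans ((Equiv.optionCongr τ).trans (finSuccEquiv' j).symm)

private lemma permAux_zero {n : ℕ} (j : Fin (n + 1)) (τ : Equiv.Perm (Fin n)) :
    permAux j τ 0 = j := by
  simp [permAux, finSuccEquiv'_at]

private lemma permAux_succ {n : ℕ} (j : Fin (n + 1)) (τ : Equiv.Perm (Fin n)) (l : Fin n) :
    permAux j τ l.succ = j.succAbove (τ l) := by
  have h : (l.succ : Fin (n + 1)) = (0 : Fin (n + 1)).succAbove l :=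
    (Fin.zero_succAbove l).symm
  rw [permAux, Equiv.trans_apply, Equiv.trans_apply, h, finSuccEquiv'_succAbove]
  simp

private lemma permAux_inv_zero {n : ℕ} (j : Fin (n + 1)) (τ : Equiv.Perm (Fin n)) :
    (permAux j τ)⁻¹ j = 0 := by
  exact Equiv.Perm.inv_eq_iff_eq.mpr (permAux_zero j τ).symm

private lemma permAux_inv_succAbove {n : ℕ} (j : Fin (n + 1)) (τ : Equiv.Perm (Fin n))
    (l : Fin n) : (permAux j τ)⁻¹ (j.succAbove l) = (τ⁻¹ l).succ := by
  have := permAux_succ j τ (τ⁻¹ l)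
  rw [show τ (τ⁻¹ l) = l from τ.apply_symm_apply l] at this
  exact Equiv.Perm.inv_eq_iff_eq.mpr this.symm

/-- A permutation-equivariant map `Q : (Fin (n+1) → α) → (Fin (n+1) → Y)`
is computed row-wise by a single shared function `F` of the corresponding entry and the
remaining entries, where `F` is invariant to permutations of the remaining entries. -/
theorem equivariant_shared_row_function
    {α Y : Type*} (n : ℕ)
    (Q : (Fin (n + 1) → α) → (Fin (n + 1) → Y))
    (hQ : ∀ (σ : Equiv.Perm (Fin (n + 1))) (z : Fin (n + 1) → α),
      Q (fun j => z (σ⁻¹ j)) = fun j => Q z (σ⁻¹ j)) :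
    ∃ F : α × (Fin n → α) → Y,
      (∀ (a : α) (τ : Equiv.Perm (Fin n)) (w : Fin n → α),
        F (a, fun l => w (τ⁻¹ l)) = F (a, w)) ∧
      ∀ (z : Fin (n + 1) → α) (j : Fin (n + 1)),
        Q z j = F (z j, fun l => z (j.succAbove l)) := by
  refine ⟨fun p => Q (Fin.cons p.1 p.2) 0, ?_, ?_⟩
  · intro a τ w
    set σ : Equiv.Perm (Fin (n + 1)) := permAux 0 τ with hσ
    have key : (fun k => (Fin.cons a w : Fin (n + 1) → α) (σ⁻¹ k))
        = Fin.cons a (fun l => w (τ⁻¹ l)) := by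
      funext k
      refine Fin.cases ?_ (fun l => ?_) k
      · rw [hσ, permAux_inv_zero]; simp
      · rw [hσ, show (l.succ : Fin (n+1)) = (0 : Fin (n+1)).succAbove l from
          (Fin.zero_succAbove l).symm, permAux_inv_succAbove]
        simp
    have := congrFun (hQ σ (Fin.cons a w)) 0
    rw [key] at this
    beta_reduce at this
    rw [hσ, permAux_inv_zero] at this
    simpa using this
  · intro z j
    set σ : Equiv.Perm (Fin (n + 1)) := permAux j 1 with hσ
    have key : (fun k => z (σ k) : Fin (n + 1) → α)
        = Fin.cons (z j) (fun l => z (j.succAbove l)) := by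
      funext k
      refine Fin.cases ?_ (fun l => ?_) k
      · rw [hσ, permAux_zero]; simp
      · rw [hσ, permAux_succ]; simp
    have := congrFun (hQ σ⁻¹ z) 0
    simp only [inv_inv] at this
    rw [key, hσ, permAux_zero] at this
    simpa using this.symm
end

section
/- Let k, m ≥ 1 and P, O be natural numbers, ρ : ℝ → ℝ any function, and let W_x, W_{xx}, W_{xi}, W_i, W_{ii}, W_{ix} : Fin O → Fin P → ℝ and b_x, b_i : Fin O → ℝ be channel-mixing weights and biases. Define the multi-channel intra-shared layer mapping (x, i) with x : Fin k → Fin P → ℝ and i : Fin m → Fin P → ℝ to (X, I) with X : Fin k → Fin O → ℝ, I : Fin m → Fin O → ℝ given by X j o = ρ (∑_{p ∈ Fin P} (W_x o p · x j p + (W_{xx} o p / k) · ∑_{l} x l p + (W_{xi} o p / m) · ∑_{l} i l p) + b_x o) and I j o = ρ (∑_{p ∈ Fin P} (W_i o p · i j p + (W_{ii} o p / m) · ∑_{l} i l p + (W_{ix} o p / k) · ∑_{l} x l p) + b_i o). Then the layer is permutation equivariant in the item indices of both blocks: for all permutations σ of Fin k and τ of Fin m, applying the layer to (σ • x, τ •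 i) yields (σ • X, τ • I), where the permutations act on the item index, i.e. (σ • x) j = x (σ⁻¹ j) as a function of channels. -/
/-- The multi-channel intra-shared layer (weights tied across item
indices, fully connected across channels) is permutation equivariant in the item
indices of both blocks. -/
theorem multichannel_intra_shared_layer_equivariant
    (k m P O : ℕ) (hk : 1 ≤ k) (hm : 1 ≤ m) (ρ : ℝ → ℝ)
    (Wx Wxx Wxi Wi Wii Wix : Fin O → Fin P → ℝ) (bx bi : Fin O → ℝ)
    (φ : (Fin k → Fin P → ℝ) × (Fin m → Fin P → ℝ) →
      (Fin k → Fin O → ℝ) × (Fin m → Fin O → ℝ))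
    (hφ : ∀ (x : Fin k → Fin P → ℝ) (i : Fin m → Fin P → ℝ),
      φ (x, i) =
        (fun j o => ρ ((∑ p, (Wx o p * x j p + (Wxx o p / k) * ∑ l, x l p +
            (Wxi o p / m) * ∑ l, i l p)) + bx o),
         fun j o => ρ ((∑ p, (Wi o p * i j p + (Wii o p / m) * ∑ l, i l p +
            (Wix o p / k) * ∑ l, x l p)) + bi o))) :
    ∀ (σ : Equiv.Perm (Fin k)) (τ : Equiv.Perm (Fin m))
      (x : Fin k → Fin P → ℝ) (i : Fin m → Fin P → ℝ),
      φ (fun j => x (σ⁻¹ j), fun j => i (τ⁻¹ j)) =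
        (fun j => (φ (x, i)).1 (σ⁻¹ j), fun j => (φ (x, i)).2 (τ⁻¹ j)) := by
  intro σ τ x i
  rw [hφ, hφ]
  have hx : ∀ p, (∑ l, x (σ⁻¹ l) p) = ∑ l, x l p := fun p =>
    Equiv.sum_comp σ⁻¹ (fun l => x l p)
  have hi : ∀ p, (∑ l, i (τ⁻¹ l) p) = ∑ l, i l p := fun p =>
    Equiv.sum_comp τ⁻¹ (fun l => i l p)
  simp only [hx, hi]
end
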